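/- Proposition 4.1(1), quasi-uniform continuity of the dual operator: Let (X,p) and (Y,q) be asymmetric normed spaces and let A : X → Y be a (p,q)-bounded linear operator with ‖A| > 0. Then for every ε > 0 and all linear functionals ψ₁, ψ₂ : Y → ℝ satisfying ψ₂(y) − ψ₁(y) ≤ ε/‖A| for all y ∈ B_q, one has ψ₂(Ax) − ψ₁(Ax) ≤ ε for all x ∈ B_p; that is, the dual operator A^♭ψ = ψ∘A is quasi-uniformly continuous with respect to the dual quasi-uniformities. -/
import Mathlib


/-- `p` is an asymmetric norm on the real vector space `X`. -/
def IsAsymmetricNorm {X : Type*} [AddCommGroup X] [Module ℝ X] (p : X → ℝ) : Prop :=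
  (∀ x, 0 ≤ p x) ∧
  (∀ x, p x = 0 → p (-x) = 0 → x = 0) ∧
  (∀ (α : ℝ), 0 ≤ α → ∀ x, p (α • x) = α * p x) ∧
  (∀ x y, p (x + y) ≤ p x + p y)

/-- The asymmetric operator norm `‖A| = sup {q(Ax) : p(x) ≤ 1}`. -/
noncomputable def opNormFlat {X Y : Type*} [AddCommGroup X] [Module ℝ X]
    [AddCommGroup Y] [Module ℝ Y] (p : X → ℝ) (q : Y → ℝ) (A : X →ₗ[ℝ] Y) : ℝ :=
  sSup ((fun x => q (A x)) '' {x | p x ≤ 1})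

/-- Proposition 4.1(1): quasi-uniform continuity of the dual operator `A^♭ψ = ψ ∘ A`.
If `A` is (p,q)-bounded with `‖A| > 0` and `ψ₂(y) − ψ₁(y) ≤ ε/‖A|` for all `y ∈ B_q`,
then `ψ₂(Ax) − ψ₁(Ax) ≤ ε` for all `x ∈ B_p`. -/
theorem dual_operator_quasiUniform_continuous {X Y : Type*}
    [AddCommGroup X] [Module ℝ X] [AddCommGroup Y] [Module ℝ Y]
    (p : X → ℝ) (q : Y → ℝ)
    (hp : IsAsymmetricNorm p) (hq : IsAsymmetricNorm q)
    (A : X →ₗ[ℝ] Y)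
    (hAbd : ∃ β : ℝ, 0 ≤ β ∧ ∀ x, q (A x) ≤ β * p x)
    (hApos : 0 < opNormFlat p q A)
    (ε : ℝ) (hε : 0 < ε) (ψ₁ ψ₂ : Y →ₗ[ℝ] ℝ)
    (hψ : ∀ y, q y ≤ 1 → ψ₂ y - ψ₁ y ≤ ε / opNormFlat p q A) :
    ∀ x, p x ≤ 1 → ψ₂ (A x) - ψ₁ (A x) ≤ ε := by
  intro x hx
  obtain ⟨β, hβ0, hβ⟩ := hAbd
  set N := opNormFlat p q A with hN
  -- the defining set is bounded above by β
  have hbdd : BddAbove ((fun x => q (A x)) '' {x | p x ≤ 1}) := by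
    refine ⟨β, ?_⟩
    rintro r ⟨z, hz, rfl⟩
    calc q (A z) ≤ β * p z := hβ z
      _ ≤ β * 1 := mul_le_mul_of_nonneg_left hz hβ0
      _ = β := mul_one β
  have hqAx_le : q (A x) ≤ N := le_csSup hbdd ⟨x, hx, rfl⟩
  rcases eq_or_lt_of_le (hq.1 (A x)) with h0 | hpos
  · -- q (A x) = 0 : scale by t to get diff ≤ 0
    have key : ∀ t : ℝ, 0 < t → ψ₂ (A x) - ψ₁ (A x) ≤ ε / N / t := by
      intro t ht
      have hqt : q (t • A x) ≤ 1 := by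
        rw [hq.2.2.1 t ht.le, ← h0]; simp
      have := hψ (t • A x) hqt
      rw [map_smul, map_smul] at this
      simp only [smul_eq_mul] at this
      rw [le_div_iff₀ ht, mul_comm]
      linarith
    by_contra hc
    push_neg at hc
    have hd : 0 < ψ₂ (A x) - ψ₁ (A x) := lt_trans hε hc
    have := key ((ε / N) / (ψ₂ (A x) - ψ₁ (A x)) + 1) (by positivity)
    have hεN : 0 < ε / N := by positivity
    have h3 := (le_div_iff₀ (by positivity : (0:ℝ) < ε / N / (ψ₂ (A x) - ψ₁ (A x)) + 1)).mp this
    have h4 : (ψ₂ (A x) - ψ₁ (A x)) * (ε / N / (ψ₂ (A x) - ψ₁ (A x)) + 1)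
        = ε / N + (ψ₂ (A x) - ψ₁ (A x)) := by field_simp
    linarith [h3, h4.symm ▸ h3]
  · -- q (A x) > 0 : rescale
    set c : ℝ := (q (A x))⁻¹ with hc
    have hcpos : 0 < c := inv_pos.mpr hpos
    have hqc : q (c • A x) ≤ 1 := by
      rw [hq.2.2.1 c hcpos.le, inv_mul_cancel₀ (ne_of_gt hpos)]
    have h1 := hψ (c • A x) hqc
    rw [map_smul, map_smul] at h1
    simp only [smul_eq_mul] at h1
    have hcc : q (A x) * c = 1 := mul_inv_cancel₀ hpos.ne'
    have h2 : ψ₂ (A x) - ψ₁ (A x) ≤ q (A x) * (ε / N) := by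
      have h5 := mul_le_mul_of_nonneg_left h1 hpos.le
      have h6 : q (A x) * (c * ψ₂ (A x) - c * ψ₁ (A x)) = ψ₂ (A x) - ψ₁ (A x) := by
        rw [mul_sub, ← mul_assoc, ← mul_assoc, hcc]; ring
      linarith [h6 ▸ h5]
    calc ψ₂ (A x) - ψ₁ (A x) ≤ q (A x) * (ε / N) := h2
      _ ≤ N * (ε / N) := by
          apply mul_le_mul_of_nonneg_right hqAx_le (by positivity)
      _ = ε := by field_simp
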